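/- arXiv:2301.04735 — 2 statements merged into one kernel-verified Lean document; each statement's English description precedes it below -/
import Mathlib

section
/- Let d ≥ 1 and let r, t : Fin d → ℝ be nonnegative and nonincreasing. Define ψ, φ ∈ ℂ^{Fin d × Fin d} by ψ(i,j) = δ_{ij}√(r i) and φ(i,j) = δ_{ij}√(t i). Then for every Borel probability measure μ on the product of unitary groups U(d) × U(d), ∫ |⟨ψ, (U ⊗ V)·φ⟩|² dμ(U,V) ≤ (Σ_{i=1}^d √(r i · t i))². In other words, local mixed-unitary strategies cannot outperform the optimal local unitary strategy for pure state conversion. -/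
/-!
The overlap `⟨ψ, (U ⊗ V) φ⟩` equals `∑ i j, √(r i) U i j V i j √(t j)`, whose modulus is at most
`∑ i j, √(r i) M i j √(t j)` with `M i j = (|U i j|² + |V i j|²) / 2` by AM–GM. Since `M` is
doubly stochastic, Birkhoff's theorem puts it in the convex hull of the permutation matrices, and
by the rearrangement inequality the identity permutation maximises the bilinear form, giving
`∑ i, √(r i t i)`. The bound holds for every pair `(U, V)`, hence for any average of them.
-/

open Matrix MeasureTheory Finset ComplexConjugate
open scoped Kronecker

namespace Matrix

variable {n : Type*} [Fintype n] [DecidableEq n]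

theorem dotProduct_mulVec_le_of_mem_doublyStochastic {M : Matrix n n ℝ}
    (hM : M ∈ doublyStochastic ℝ n) {x y : n → ℝ} (hxy : Monovary x y) :
    x ⬝ᵥ (M *ᵥ y) ≤ x ⬝ᵥ y := by
  have hlin : IsLinearMap ℝ fun M : Matrix n n ℝ => x ⬝ᵥ (M *ᵥ y) :=
    ⟨fun A B => by rw [add_mulVec, dotProduct_add],
      fun c A => by rw [smul_mulVec, dotProduct_smul]⟩
  rw [← SetLike.mem_coe, doublyStochastic_eq_convexHull_permMatrix] at hM
  refine convexHull_min ?_ (convex_halfSpace_le hlin _) hM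
  rintro _ ⟨σ, rfl⟩
  rw [Set.mem_ofPred_eq, permMatrix_mulVec]
  exact hxy.sum_mul_comp_perm_le_sum_mul

variable {𝕜 : Type*} [RCLike 𝕜]

theorem of_norm_sq_mem_doublyStochastic_of_mem_unitaryGroup {U : Matrix n n 𝕜}
    (hU : U ∈ unitaryGroup n 𝕜) : of (fun i j => ‖U i j‖ ^ 2) ∈ doublyStochastic ℝ n := by
  refine mem_doublyStochastic_iff_sum.2 ⟨fun i j => sq_nonneg _, fun i => ?_, fun j => ?_⟩
  · have h := congrFun (congrFun (mem_unitaryGroup_iff.1 hU) i) i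
    simp only [mul_apply, star_apply, RCLike.star_def, RCLike.mul_conj, one_apply_eq] at h
    exact_mod_cast h
  · have h := congrFun (congrFun (mem_unitaryGroup_iff'.1 hU) j) j
    simp only [mul_apply, star_apply, RCLike.star_def, RCLike.conj_mul, one_apply_eq] at h
    exact_mod_cast h

theorem sum_conj_diag_mul_kronecker_mulVec_diag (A B : Matrix n n 𝕜) (p q : n → 𝕜) :
    ∑ y : n × n, conj (if y.1 = y.2 then p y.1 else 0) *
        ((A ⊗ₖ B) *ᵥ fun z : n × n => if z.1 = z.2 then q z.1 else 0) y
      = ∑ i, ∑ j, conj (p i) * (A i j * B i j) * q j := by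
  simp only [Fintype.sum_prod_type, mulVec, dotProduct, kroneckerMap_apply, mul_ite, mul_zero,
    apply_ite conj, map_zero, ite_mul, zero_mul, sum_ite_irrel, sum_const_zero, sum_ite_eq,
    mem_univ, if_true, mul_sum]
  exact sum_congr rfl fun i _ => sum_congr rfl fun j _ => by ring

theorem norm_sum_conj_diag_mul_kronecker_mulVec_diag_le {U V : Matrix n n 𝕜}
    (hU : U ∈ unitaryGroup n 𝕜) (hV : V ∈ unitaryGroup n 𝕜) {p q : n → 𝕜}
    (hpq : Monovary (‖p ·‖) (‖q ·‖)) :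
    ‖∑ y : n × n, conj (if y.1 = y.2 then p y.1 else 0) *
        ((U ⊗ₖ V) *ᵥ fun z : n × n => if z.1 = z.2 then q z.1 else 0) y‖
      ≤ ∑ i, ‖p i‖ * ‖q i‖ := by
  set M : Matrix n n ℝ := (1 / 2 : ℝ) • of (fun i j => ‖U i j‖ ^ 2) +
    (1 / 2 : ℝ) • of (fun i j => ‖V i j‖ ^ 2)
  have hM : M ∈ doublyStochastic ℝ n :=
    convex_doublyStochastic (of_norm_sq_mem_doublyStochastic_of_mem_unitaryGroup hU)
      (of_norm_sq_mem_doublyStochastic_of_mem_unitaryGroup hV) (by norm_num) (by norm_num)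
      (by norm_num)
  rw [sum_conj_diag_mul_kronecker_mulVec_diag]
  calc ‖∑ i, ∑ j, conj (p i) * (U i j * V i j) * q j‖
      ≤ ∑ i, ∑ j, ‖p i‖ * (‖U i j‖ * ‖V i j‖) * ‖q j‖ := by
        refine (norm_sum_le _ _).trans (sum_le_sum fun i _ => (norm_sum_le _ _).trans ?_)
        simp only [norm_mul, RCLike.norm_conj, le_refl]
    _ ≤ ∑ i, ∑ j, ‖p i‖ * M i j * ‖q j‖ := by
        gcongr with i _ j _
        simp only [M, Matrix.add_apply, Matrix.smul_apply, of_apply, smul_eq_mul]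
        linarith [two_mul_le_add_sq ‖U i j‖ ‖V i j‖]
    _ = (‖p ·‖) ⬝ᵥ (M *ᵥ (‖q ·‖)) := by
        simp only [dotProduct, mulVec, mul_sum, mul_assoc]
    _ ≤ ∑ i, ‖p i‖ * ‖q i‖ := dotProduct_mulVec_le_of_mem_doublyStochastic hM hpq

end Matrix

theorem stmt_2_general (d : ℕ) (r t : Fin d → ℝ)
    (hr0 : ∀ i, 0 ≤ r i)
    (hr : Antitone r) (ht : Antitone t)
    [MeasurableSpace (Matrix.unitaryGroup (Fin d) ℂ × Matrix.unitaryGroup (Fin d) ℂ)]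
    (μ : Measure (Matrix.unitaryGroup (Fin d) ℂ × Matrix.unitaryGroup (Fin d) ℂ))
    [IsProbabilityMeasure μ] :
    (∫ UV : Matrix.unitaryGroup (Fin d) ℂ × Matrix.unitaryGroup (Fin d) ℂ,
      ‖(∑ y : Fin d × Fin d,
        (starRingEnd ℂ) (if y.1 = y.2 then (Real.sqrt (r y.1) : ℂ) else 0) *
          (((UV.1 : Matrix (Fin d) (Fin d) ℂ) ⊗ₖ (UV.2 : Matrix (Fin d) (Fin d) ℂ)) *ᵥ
            (fun z : Fin d × Fin d =>
              if z.1 = z.2 then (Real.sqrt (t z.1) : ℂ) else 0)) y)‖ ^ 2 ∂μ)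
    ≤ (∑ i, Real.sqrt (r i * t i)) ^ 2 := by
  have hnorm (s : Fin d → ℝ) : (fun i => ‖(√(s i) : ℂ)‖) = fun i => √(s i) := by
    simp only [Complex.norm_real, Real.norm_of_nonneg (Real.sqrt_nonneg _)]
  have hmono : Monovary (fun i => ‖(√(r i) : ℂ)‖) (fun i => ‖(√(t i) : ℂ)‖) := by
    rw [hnorm, hnorm]
    exact (Real.sqrt_monotone.comp_antitone hr).monovary (Real.sqrt_monotone.comp_antitone ht)
  refine (Real.le_norm_self _).trans
    ((norm_integral_le_of_norm_le_const (C := (∑ i, √(r i * t i)) ^ 2)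
      (ae_of_all _ fun UV => ?_)).trans_eq (by simp))
  rw [norm_pow, norm_norm]
  refine pow_le_pow_left₀ (norm_nonneg _) ?_ 2
  refine (norm_sum_conj_diag_mul_kronecker_mulVec_diag_le UV.1.2 UV.2.2 hmono).trans_eq ?_
  simp only [Complex.norm_real, Real.norm_of_nonneg (Real.sqrt_nonneg _), Real.sqrt_mul (hr0 _)]

/-- local mixed-unitary strategies cannot outperform the optimal
local-unitary strategy: for every Borel probability measure `μ` on pairs of
unitaries, the average fidelity is at most `(∑ i, √(r i * t i))²`. -/
theorem stmt_2 (d : ℕ) (hd : 1 ≤ d) (r t : Fin d → ℝ)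
    (hr0 : ∀ i, 0 ≤ r i) (ht0 : ∀ i, 0 ≤ t i)
    (hr : Antitone r) (ht : Antitone t)
    [MeasurableSpace (Matrix.unitaryGroup (Fin d) ℂ × Matrix.unitaryGroup (Fin d) ℂ)]
    [BorelSpace (Matrix.unitaryGroup (Fin d) ℂ × Matrix.unitaryGroup (Fin d) ℂ)]
    (μ : Measure (Matrix.unitaryGroup (Fin d) ℂ × Matrix.unitaryGroup (Fin d) ℂ))
    [IsProbabilityMeasure μ] :
    (∫ UV : Matrix.unitaryGroup (Fin d) ℂ × Matrix.unitaryGroup (Fin d) ℂ,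
      ‖(∑ y : Fin d × Fin d,
        (starRingEnd ℂ) (if y.1 = y.2 then (Real.sqrt (r y.1) : ℂ) else 0) *
          (((UV.1 : Matrix (Fin d) (Fin d) ℂ) ⊗ₖ (UV.2 : Matrix (Fin d) (Fin d) ℂ)) *ᵥ
            (fun z : Fin d × Fin d =>
              if z.1 = z.2 then (Real.sqrt (t z.1) : ℂ) else 0)) y)‖ ^ 2 ∂μ)
    ≤ (∑ i, Real.sqrt (r i * t i)) ^ 2 :=
  stmt_2_general d r t hr0 hr ht μ
end

section
/- Let p and q be nonincreasing probability vectors (on Fin a and Fin b respectively, with first entries p(1) and q(1)). If p(1) ≤ q(1), then for every probability vector p' on any finite index set, (Σ_i √( q↓(i) · (p⊗p')↓(i) ))² ≤ ( √(p(1)·q(1)) + √((1 − p(1))·(1 − q(1))) )². -/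
/-!
The fidelity sum is `∑ᵢ √(vᵢ uᵢ)` with `v = q↓`, `u = (p ⊗ p')↓`. Splitting off the first term and
applying Cauchy–Schwarz to the rest bounds it by `√(v₀ u₀) + √((1 - v₀)(1 - u₀))`, the fidelity of
the two-outcome distributions `(v₀, 1 - v₀)` and `(u₀, 1 - u₀)`. Here `v₀ = q(1)` and
`u₀ ≤ p(1) ≤ q(1)`, and `t ↦ √(q t) + √((1 - q)(1 - t))` is nondecreasing for `t ≤ q`.
-/

/-- A probability vector on `Fin c`. -/
def IsProbVec {c : ℕ} (p : Fin c → ℝ) : Prop := (∀ i, 0 ≤ p i) ∧ ∑ i, p i = 1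

/-- `w : ℕ → ℝ` is the nonincreasing rearrangement of the finite vector `v`,
padded with zeros. -/
def IsSortedPadOf {ι : Type} [Fintype ι] (v : ι → ℝ) (w : ℕ → ℝ) : Prop :=
  Antitone w ∧ (∀ k, Fintype.card ι ≤ k → w k = 0) ∧
    ∃ e : Fin (Fintype.card ι) ≃ ι, ∀ k : Fin (Fintype.card ι), w (k : ℕ) = v (e k)

open Finset

theorem IsProbVec.le_one {c : ℕ} {p : Fin c → ℝ} (hp : IsProbVec p) (i : Fin c) : p i ≤ 1 :=
  hp.2 ▸ single_le_sum (fun j _ => hp.1 j) (mem_univ i)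

theorem IsProbVec.nonempty {c : ℕ} {p : Fin c → ℝ} (hp : IsProbVec p) : Nonempty (Fin c) := by
  by_contra h
  have hc : c = 0 := by simpa [← Fin.pos_iff_nonempty] using h
  subst hc
  simpa using hp.2

namespace IsSortedPadOf

variable {ι : Type} [Fintype ι] {v : ι → ℝ} {w : ℕ → ℝ}

theorem nonneg (h : IsSortedPadOf v w) (k : ℕ) : 0 ≤ w k :=
  h.2.1 (k + Fintype.card ι) (Nat.le_add_left _ _) ▸ h.1 (Nat.le_add_right k _)

theorem sum_range (h : IsSortedPadOf v w) {N : ℕ} (hN : Fintype.card ι ≤ N) :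
    ∑ i ∈ range N, w i = ∑ x, v x := by
  obtain ⟨-, hzero, e, he⟩ := h
  rw [← sum_range_add_sum_Ico _ hN, sum_eq_zero fun i hi => hzero i (mem_Ico.1 hi).1, add_zero,
    ← Fin.sum_univ_eq_sum_range, ← e.sum_comp v]
  exact sum_congr rfl fun k _ => he k

theorem le_apply_zero (h : IsSortedPadOf v w) (x : ι) : v x ≤ w 0 := by
  obtain ⟨hanti, -, e, he⟩ := h
  simpa only [he, e.apply_symm_apply] using hanti (Nat.zero_le (e.symm x))

theorem exists_apply_zero_eq [Nonempty ι] (h : IsSortedPadOf v w) : ∃ x, w 0 = v x := by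
  obtain ⟨-, -, e, he⟩ := h
  exact ⟨_, he ⟨0, Fintype.card_pos⟩⟩

end IsSortedPadOf

theorem sum_range_sqrt_mul_le_sqrt_head_add {N : ℕ} {u v : ℕ → ℝ} (hN : 0 < N)
    (hu : ∀ i, 0 ≤ u i) (hv : ∀ i, 0 ≤ v i)
    (hsu : ∑ i ∈ range N, u i = 1) (hsv : ∑ i ∈ range N, v i = 1) :
    ∑ i ∈ range N, √(v i * u i) ≤ √(v 0 * u 0) + √((1 - v 0) * (1 - u 0)) := by
  obtain ⟨n, rfl⟩ := Nat.exists_eq_add_one_of_ne_zero hN.ne'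
  rw [sum_range_succ'] at hsu hsv ⊢
  have hu_tail : 1 - u 0 = ∑ i ∈ range n, u (i + 1) := by linarith
  have hv_tail : 1 - v 0 = ∑ i ∈ range n, v (i + 1) := by linarith
  have hcs : ∑ i ∈ range n, √(v (i + 1) * u (i + 1)) ≤ √((1 - v 0) * (1 - u 0)) := by
    simp only [Real.sqrt_mul (hv _), hu_tail, hv_tail,
      Real.sqrt_mul (sum_nonneg fun i _ => hv (i + 1))]
    exact Real.sum_sqrt_mul_sqrt_le _ (fun i => hv (i + 1)) fun i => hu (i + 1)
  linarith

theorem sqrt_one_sub_mul_sqrt_le {q x : ℝ} (hx : 0 ≤ x) (hxq : x ≤ q) (hq : q ≤ 1) :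
    √(1 - q) * √x ≤ √q * √(1 - x) := by
  rw [← Real.sqrt_mul (by linarith), ← Real.sqrt_mul (by linarith)]
  exact Real.sqrt_le_sqrt (by nlinarith)

theorem monotoneOn_sqrt_mul_add_sqrt_one_sub_mul {q : ℝ} (hq : q ≤ 1) :
    MonotoneOn (fun t => √(q * t) + √((1 - q) * (1 - t))) (Set.Icc 0 q) := by
  rintro t ⟨ht, htq⟩ s ⟨hs, hsq⟩ hts
  have hq0 : 0 ≤ q := ht.trans htq
  simp only [Real.sqrt_mul hq0, Real.sqrt_mul (sub_nonneg.2 hq)]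
  have hBE := sqrt_one_sub_mul_sqrt_le ht htq hq
  have hBC := sqrt_one_sub_mul_sqrt_le hs hsq hq
  set A := √q
  set B := √(1 - q)
  set E := √t
  set F := √(1 - t)
  set C := √s
  set D := √(1 - s)
  have hEC : E ≤ C := Real.sqrt_le_sqrt hts
  have hDF : D ≤ F := Real.sqrt_le_sqrt (by linarith)
  have hD : 0 ≤ D := Real.sqrt_nonneg _
  -- `F² - D² = s - t = C² - E²` turns the goal `B (F - D) ≤ A (C - E)` into `B (C + E) ≤ A (F + D)`
  have hsq_diff : (F + D) * (F - D) = (C + E) * (C - E) := by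
    have : F ^ 2 + E ^ 2 = D ^ 2 + C ^ 2 := by
      simp only [F, E, D, C, Real.sq_sqrt ht, Real.sq_sqrt hs,
        Real.sq_sqrt (by linarith : 0 ≤ 1 - t), Real.sq_sqrt (by linarith : 0 ≤ 1 - s)]
      ring
    linear_combination this
  have hprod : (F + D) * (B * (F - D)) ≤ (F + D) * (A * (C - E)) :=
    calc (F + D) * (B * (F - D)) = (B * C + B * E) * (C - E) := by linear_combination B * hsq_diff
      _ ≤ (A * D + A * F) * (C - E) := by gcongr
      _ = (F + D) * (A * (C - E)) := by ring
  rcases (add_nonneg (hD.trans hDF) hD).eq_or_lt with hFD | hFD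
  · obtain ⟨hF0, hD0⟩ : F = 0 ∧ D = 0 := ⟨by linarith, by linarith⟩
    rw [hF0, hD0, mul_zero, add_zero, add_zero]
    exact mul_le_mul_of_nonneg_left hEC (Real.sqrt_nonneg _)
  · linarith [le_of_mul_le_mul_left hprod hFD]

/-- if `p`, `q` are nonincreasing probability vectors with largest
entries `p(1) ≤ q(1)`, then for every ancilla distribution `p'` the
zero-communication conversion fidelity is at most
`(√(p(1)q(1)) + √((1-p(1))(1-q(1))))²`. -/
theorem stmt_10 (a b : ℕ) (ha : 1 ≤ a) (hb : 1 ≤ b)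
    (p : Fin a → ℝ) (q : Fin b → ℝ) (hp : IsProbVec p) (hq : IsProbVec q)
    (hpa : Antitone p) (hqa : Antitone q)
    (hpq : p ⟨0, ha⟩ ≤ q ⟨0, hb⟩) :
    ∀ (c : ℕ) (p' : Fin c → ℝ), IsProbVec p' →
      ∀ u v : ℕ → ℝ,
        IsSortedPadOf (fun x : Fin a × Fin c => p x.1 * p' x.2) u →
        IsSortedPadOf q v →
        (∑ i ∈ Finset.range (a * c + b), Real.sqrt (v i * u i)) ^ 2 ≤
          (Real.sqrt (p ⟨0, ha⟩ * q ⟨0, hb⟩) +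
            Real.sqrt ((1 - p ⟨0, ha⟩) * (1 - q ⟨0, hb⟩))) ^ 2 := by
  intro c p' hp' u v hu hv
  have : Nonempty (Fin a) := ⟨⟨0, ha⟩⟩
  have : Nonempty (Fin b) := ⟨⟨0, hb⟩⟩
  have := hp'.nonempty
  have hv0 : v 0 = q ⟨0, hb⟩ := by
    obtain ⟨x, hx⟩ := hv.exists_apply_zero_eq
    exact le_antisymm (hx ▸ hqa (Nat.zero_le x.val)) (hv.le_apply_zero _)
  have hu0 : u 0 ≤ p ⟨0, ha⟩ := by
    obtain ⟨⟨i, j⟩, hij⟩ := hu.exists_apply_zero_eq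
    rw [hij]
    exact (mul_le_of_le_one_right (hp.1 i) (hp'.le_one j)).trans (hpa (Nat.zero_le i.val))
  have hsu : ∑ i ∈ range (a * c + b), u i = 1 := by
    rw [hu.sum_range (by simp), Fintype.sum_prod_type, ← Fintype.sum_mul_sum, hp.2, hp'.2,
      one_mul]
  have hsv : ∑ i ∈ range (a * c + b), v i = 1 := by
    rw [hv.sum_range (by simp), hq.2]
  calc (∑ i ∈ range (a * c + b), √(v i * u i)) ^ 2
      ≤ (√(v 0 * u 0) + √((1 - v 0) * (1 - u 0))) ^ 2 :=
        pow_le_pow_left₀ (sum_nonneg fun _ _ => Real.sqrt_nonneg _)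
          (sum_range_sqrt_mul_le_sqrt_head_add (by omega) hu.nonneg hv.nonneg hsu hsv) 2
    _ ≤ (√(q ⟨0, hb⟩ * p ⟨0, ha⟩) + √((1 - q ⟨0, hb⟩) * (1 - p ⟨0, ha⟩))) ^ 2 := by
        rw [hv0]
        exact pow_le_pow_left₀ (by positivity) (monotoneOn_sqrt_mul_add_sqrt_one_sub_mul
          (hq.le_one _) ⟨hu.nonneg 0, hu0.trans hpq⟩ ⟨hp.1 _, hpq⟩ hu0) 2
    _ = _ := by rw [mul_comm, mul_comm (1 - _)]
end
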